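/- Let σ > 0 and Λ > 0. Then ∫ x²·e^{−Λ·|x|} d(gaussianReal 0 σ²)(x) = σ²·(1 + Λ²·σ²) · ∫ e^{−Λ·|x|} d(gaussianReal 0 σ²)(x) − Λ·σ³·√(2/π). -/

import Mathlib

/-!
Write `v = σ²` and `φ` for the centred Gaussian density. Since `φ' t = -(t / v) φ t`, the function
`G t = (Λ v² - v t) e^{-Λ t} φ t` is an antiderivative of `(t² - v (1 + Λ² v)) e^{-Λ t} φ t`; both
are integrable on `(0, ∞)`, so `G` tends to `0` at infinity. The integrand
`(x² - v (1 + Λ² v)) e^{-Λ |x|} φ x` is even, so its integral over `ℝ` is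
`2 (0 - G 0) = -2 Λ v² φ 0 = -Λ σ³ √(2/π)`.
-/

open MeasureTheory ProbabilityTheory Real Set
open scoped NNReal

namespace ProbabilityTheory

variable {μ : ℝ} {v : ℝ≥0}

lemma integrable_gaussianReal_iff {E : Type*} [NormedAddCommGroup E] [NormedSpace ℝ E]
    (hv : v ≠ 0) {f : ℝ → E} :
    Integrable f (gaussianReal μ v) ↔ Integrable (fun x ↦ gaussianPDFReal μ v x • f x) := by
  rw [gaussianReal_of_var_ne_zero _ hv, integrable_withDensity_iff_integrable_smul'
    (measurable_gaussianPDF μ v) (ae_of_all _ fun _ ↦ gaussianPDF_lt_top)]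
  simp [toReal_gaussianPDF]

lemma integrable_pow_gaussianReal (n : ℕ) : Integrable (fun x ↦ x ^ n) (gaussianReal μ v) := by
  refine (integrable_norm_iff (by fun_prop)).mp ?_
  simpa [norm_pow] using (memLp_id_gaussianReal (μ := μ) (v := v) n).integrable_norm_pow'

lemma integrable_pow_mul_gaussianPDFReal (μ : ℝ) (v : ℝ≥0) (n : ℕ) :
    Integrable (fun x ↦ x ^ n * gaussianPDFReal μ v x) := by
  rcases eq_or_ne v 0 with rfl | hv
  · simp
  simpa [mul_comm] using (integrable_gaussianReal_iff hv).mp (integrable_pow_gaussianReal n)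

lemma gaussianPDFReal_self (μ : ℝ) (v : ℝ≥0) : gaussianPDFReal μ v μ = (√(2 * π * v))⁻¹ := by
  simp [gaussianPDFReal]

lemma gaussianPDFReal_zero_abs (v : ℝ≥0) (x : ℝ) :
    gaussianPDFReal 0 v |x| = gaussianPDFReal 0 v x := by
  simp [gaussianPDFReal]

lemma hasDerivAt_gaussianPDFReal (μ : ℝ) (v : ℝ≥0) (x : ℝ) :
    HasDerivAt (gaussianPDFReal μ v) (-(x - μ) / v * gaussianPDFReal μ v x) x := by
  have h : HasDerivAt (fun y ↦ -(y - μ) ^ 2 / (2 * v)) (-(x - μ) / v) x := by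
    refine ((((hasDerivAt_id x).sub_const μ).pow 2).neg.div_const (2 * (v : ℝ))).congr_deriv ?_
    simp only [id]
    ring
  rw [gaussianPDFReal_def]
  exact (h.exp.const_mul _).congr_deriv (by ring)

variable {Λ : ℝ}

lemma norm_exp_neg_mul_le_one (hΛ : 0 ≤ Λ) {t : ℝ} (ht : 0 ≤ t) : ‖exp (-Λ * t)‖ ≤ 1 := by
  rw [norm_of_nonneg (exp_pos _).le, exp_le_one_iff]
  nlinarith

lemma integrableOn_Ioi_mul_exp_neg_mul {f : ℝ → ℝ} (hf : Integrable f) (hΛ : 0 ≤ Λ) :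
    IntegrableOn (fun t ↦ f t * exp (-Λ * t)) (Ioi 0) :=
  hf.integrableOn.mul_bdd (by fun_prop) <| (ae_restrict_iff' measurableSet_Ioi).mpr <|
    ae_of_all _ fun _ ht ↦ norm_exp_neg_mul_le_one hΛ (le_of_lt ht)

lemma hasDerivAt_tilted_gaussian_antideriv (hv : v ≠ 0) (Λ t : ℝ) :
    HasDerivAt (fun t ↦ (Λ * v ^ 2 - v * t) * gaussianPDFReal 0 v t * exp (-Λ * t))
      ((t ^ 2 - v * (1 + Λ ^ 2 * v)) * gaussianPDFReal 0 v t * exp (-Λ * t)) t := by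
  have hlin : HasDerivAt (fun t ↦ Λ * v ^ 2 - v * t) (-(v : ℝ)) t := by
    simpa using ((hasDerivAt_id t).const_mul (v : ℝ)).const_sub (Λ * v ^ 2)
  have hexp : HasDerivAt (fun t ↦ exp (-Λ * t)) (exp (-Λ * t) * -Λ) t := by
    simpa using ((hasDerivAt_id t).const_mul (-Λ)).exp
  refine ((hlin.mul (hasDerivAt_gaussianPDFReal 0 v t)).mul hexp).congr_deriv ?_
  have hv' : (v : ℝ) ≠ 0 := by exact_mod_cast hv
  simp only [Pi.mul_apply]
  field_simp
  ring

lemma integral_Ioi_tilted_gaussianPDFReal (hv : v ≠ 0) (hΛ : 0 ≤ Λ) :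
    ∫ t in Ioi 0, (t ^ 2 - v * (1 + Λ ^ 2 * v)) * gaussianPDFReal 0 v t * exp (-Λ * t) =
      -(Λ * v ^ 2 * gaussianPDFReal 0 v 0) := by
  set α : ℝ := v * (1 + Λ ^ 2 * v)
  have hF : Integrable (fun t ↦ (t ^ 2 - α) * gaussianPDFReal 0 v t) := by
    refine ((integrable_pow_mul_gaussianPDFReal 0 v 2).sub
      ((integrable_pow_mul_gaussianPDFReal 0 v 0).const_mul α)).congr (ae_of_all _ fun t ↦ ?_)
    simp only [Pi.sub_apply, pow_zero]
    ring
  have hG : Integrable (fun t ↦ (Λ * v ^ 2 - v * t) * gaussianPDFReal 0 v t) := by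
    refine (((integrable_pow_mul_gaussianPDFReal 0 v 0).const_mul (Λ * v ^ 2)).sub
      ((integrable_pow_mul_gaussianPDFReal 0 v 1).const_mul (v : ℝ))).congr (ae_of_all _ fun t ↦ ?_)
    simp only [Pi.sub_apply]
    ring
  have hderiv := fun t (_ : t ∈ Ioi (0 : ℝ)) ↦ hasDerivAt_tilted_gaussian_antideriv hv Λ t
  have hFint := integrableOn_Ioi_mul_exp_neg_mul hF hΛ
  rw [integral_Ioi_of_hasDerivAt_of_tendsto
    (hasDerivAt_tilted_gaussian_antideriv hv Λ 0).continuousAt.continuousWithinAt hderiv hFint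
    (tendsto_zero_of_hasDerivAt_of_integrableOn_Ioi hderiv hFint
      (integrableOn_Ioi_mul_exp_neg_mul hG hΛ))]
  simp

theorem integral_sq_mul_exp_neg_mul_abs_gaussianReal (hv : v ≠ 0) (hΛ : 0 ≤ Λ) :
    ∫ x, x ^ 2 * exp (-Λ * |x|) ∂gaussianReal 0 v =
      v * (1 + Λ ^ 2 * v) * ∫ x, exp (-Λ * |x|) ∂gaussianReal 0 v -
        2 * Λ * v ^ 2 * gaussianPDFReal 0 v 0 := by
  set α : ℝ := v * (1 + Λ ^ 2 * v)
  have hbound : ∀ᵐ x ∂gaussianReal 0 v, ‖exp (-Λ * |x|)‖ ≤ 1 :=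
    ae_of_all _ fun x ↦ norm_exp_neg_mul_le_one hΛ (abs_nonneg x)
  have hsq : Integrable (fun x ↦ x ^ 2 * exp (-Λ * |x|)) (gaussianReal 0 v) :=
    (integrable_pow_gaussianReal 2).mul_bdd (by fun_prop) hbound
  have hexp : Integrable (fun x ↦ exp (-Λ * |x|)) (gaussianReal 0 v) :=
    .of_bound (by fun_prop) 1 hbound
  have key : ∫ x, x ^ 2 * exp (-Λ * |x|) ∂gaussianReal 0 v -
      α * ∫ x, exp (-Λ * |x|) ∂gaussianReal 0 v = -2 * (Λ * v ^ 2 * gaussianPDFReal 0 v 0) :=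
    calc _ = ∫ x, (x ^ 2 - α) * exp (-Λ * |x|) ∂gaussianReal 0 v := by
          rw [← integral_const_mul, ← integral_sub hsq (hexp.const_mul α)]
          simp only [sub_mul]
      _ = ∫ x, (fun t ↦ (t ^ 2 - α) * gaussianPDFReal 0 v t * exp (-Λ * t)) |x| := by
          rw [integral_gaussianReal_eq_integral_smul hv]
          congr 1 with x
          dsimp only
          rw [smul_eq_mul, gaussianPDFReal_zero_abs, sq_abs]
          ring
      _ = 2 * ∫ t in Ioi 0, (t ^ 2 - α) * gaussianPDFReal 0 v t * exp (-Λ * t) :=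
          integral_comp_abs (f := fun t ↦ (t ^ 2 - α) * gaussianPDFReal 0 v t * exp (-Λ * t))
      _ = _ := by
          rw [integral_Ioi_tilted_gaussianPDFReal hv hΛ]
          ring
  linarith

end ProbabilityTheory

/-- Exponentially reweighted second moment of the half-normal distribution
with scale `σ`:
`∫ x²·e^{−Λ|x|} = σ²·(1 + Λ²σ²)·∫ e^{−Λ|x|} − Λσ³·√(2/π)` (all integrals
w.r.t. `gaussianReal 0 σ²`). -/
theorem halfNormal_tilted_second_moment (σ : ℝ≥0) (hσ : 0 < σ) (Λ : ℝ)
    (hΛ : 0 < Λ) :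
    ∫ x, x ^ 2 * Real.exp (-Λ * |x|) ∂(gaussianReal 0 (σ ^ 2)) =
      (σ : ℝ) ^ 2 * (1 + Λ ^ 2 * (σ : ℝ) ^ 2) *
          (∫ x, Real.exp (-Λ * |x|) ∂(gaussianReal 0 (σ ^ 2))) -
        Λ * (σ : ℝ) ^ 3 * Real.sqrt (2 / Real.pi) := by
  rw [integral_sq_mul_exp_neg_mul_abs_gaussianReal (pow_ne_zero 2 hσ.ne') hΛ.le,
    gaussianPDFReal_self]
  have hsqrt : √(2 * π * ((σ ^ 2 : ℝ≥0) : ℝ)) = √(2 * π) * σ := by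
    rw [NNReal.coe_pow, sqrt_mul (by positivity), sqrt_sq σ.coe_nonneg]
  have hsqrt_div : √(2 / π) = 2 / √(2 * π) := by
    rw [eq_div_iff (by positivity), ← sqrt_mul (by positivity),
      show 2 / π * (2 * π) = 2 ^ 2 by field_simp, sqrt_sq zero_le_two]
  rw [hsqrt, hsqrt_div, NNReal.coe_pow]
  field_simp
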